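/- Let m ≥ 2 and k ≥ 1, and let T_{m,k} be the balanced m-ary tree of depth k. Then the minimum cardinality of a propagating set consisting only of leaves equals the unrestricted minimum: π_leaf(T_{m,k}) = π(T_{m,k}). Equivalently, there exists a set S of leaves of T_{m,k} with S ↷ T_{m,k} and #S = π(T_{m,k}). -/

import Mathlib

/-- The propagation closure: `PropReach G S v` means vertex `v` eventually receives the
information when the process starts from the set `S` on the graph `G`.  A vertex `w` can be
added whenever some vertex `v` already having the information is adjacent to `w` and every
neighbour of `v` other than `w` already has the information. -/
inductive PropReach {V : Type*} (G : SimpleGraph V) (S : Set V) : V → Prop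
  | base {v : V} (hv : v ∈ S) : PropReach G S v
  | step {v w : V} (hv : PropReach G S v) (hadj : G.Adj v w)
      (hall : ∀ x : V, G.Adj v x → x ≠ w → PropReach G S x) : PropReach G S w

/-- `S ↷ G` : the set `S` propagates to (all of) the graph `G`. -/
def Propagates {V : Type*} (G : SimpleGraph V) (S : Set V) : Prop :=
  ∀ v : V, PropReach G S v

/-- `π(G)`: the minimum cardinality of a set of vertices propagating to `G`. -/
noncomputable def propNum {V : Type*} (G : SimpleGraph V) : ℕ :=
  sInf {n : ℕ | ∃ S : Set V, S.ncard = n ∧ Propagates G S}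

/-- The balanced `m`-ary tree of depth `d`: vertices are words over an alphabet of
size `m` of length at most `d` (the root is the empty word), and each vertex `l` of
length `< d` is adjacent to its `m` children `x :: l`. -/
def BalancedTree (m d : ℕ) : SimpleGraph {l : List (Fin m) // l.length ≤ d} where
  Adj a b := (∃ x : Fin m, (a : List (Fin m)) = x :: (b : List (Fin m))) ∨
             (∃ x : Fin m, (b : List (Fin m)) = x :: (a : List (Fin m)))
  symm := ⟨fun a b h => h.symm⟩
  loopless := ⟨by
    rintro a (⟨x, hx⟩ | ⟨x, hx⟩) <;> simpa using congrArg List.length hx⟩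

/-!
If `S` propagates to `G`, then a kernel vector of the adjacency matrix of `G` that vanishes on
`S` vanishes everywhere, because each forcing step reads `x w = -∑ (other neighbours) = 0` off
the row of the forcing vertex. Hence `π(G) ≥ dim ker A(G)`.

For `T_{m,k}` fix letters `i ≠ j` and let `L_k` consist of the leaves whose head (last step from
the root) is not `i`, together with the leaves `i :: j :: v` for `v ∈ L_{k-2}`. This set of leaves
propagates: once level `k - 1` is informed, the propagation of `L_{k-2}` in `T_{m,k-2}` runs
inside `T_{m,k}`. Conversely every function on `L_k` extends to a kernel vector of `A(T_{m,k})`: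
balance each family of sibling leaves on its child `i`, and add the kernel vector of `T_{m,k-2}`
lifted by putting `-y v` at the leaves `i :: b :: v`. So `|L_k| ≤ dim ker A ≤ π ≤ |L_k|`.
-/

open Module Set Matrix

section LinearAlgebra

variable {K V : Type*} [Field K] [Fintype V]

theorem ncard_le_finrank_of_forall_exists_eqOn {W : Submodule K (V → K)} {S : Set V}
    (h : ∀ f : V → K, ∃ x ∈ W, EqOn x f S) : S.ncard ≤ finrank K W := by
  classical
  let restrict := LinearMap.funLeft K K (Subtype.val : S → V) ∘ₗ W.subtype
  have hsurj : Function.Surjective restrict := by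
    intro c
    obtain ⟨x, hxW, hx⟩ := h (Function.extend Subtype.val c 0)
    refine ⟨⟨x, hxW⟩, funext fun s => ?_⟩
    simp [restrict, LinearMap.funLeft, hx s.2]
  have := LinearMap.finrank_le_finrank_of_surjective hsurj
  rwa [finrank_fintype_fun_eq_card, ← Nat.card_eq_fintype_card, Nat.card_coe_set_eq] at this

theorem finrank_le_ncard_of_eqOn_zero {W : Submodule K (V → K)} {S : Set V}
    (h : ∀ x ∈ W, EqOn x 0 S → x = 0) : finrank K W ≤ S.ncard := by
  classical
  let restrict := LinearMap.funLeft K K (Subtype.val : S → V) ∘ₗ W.subtype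
  have hinj : Function.Injective restrict := by
    rw [← LinearMap.ker_eq_bot, LinearMap.ker_eq_bot']
    intro x hx
    exact Subtype.ext (h x x.2 fun s hs => congrFun hx ⟨s, hs⟩)
  have := LinearMap.finrank_le_finrank_of_injective hinj
  rwa [finrank_fintype_fun_eq_card, ← Nat.card_eq_fintype_card, Nat.card_coe_set_eq] at this

end LinearAlgebra

section Nullity

variable {K V : Type*} [Field K] [Fintype V] {G : SimpleGraph V} [DecidableRel G.Adj] {S : Set V}

theorem PropReach.eq_zero_of_adjMatrix_mulVec_eq_zero {x : V → K}
    (hx : G.adjMatrix K *ᵥ x = 0) (hS : EqOn x 0 S) {v : V} (h : PropReach G S v) : x v = 0 := by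
  induction h with
  | base hv => exact hS hv
  | @step v w _ hadj _ _ ih =>
    have hsum := congrFun hx v
    rw [SimpleGraph.adjMatrix_mulVec_apply, Pi.zero_apply,
      Finset.sum_eq_single_of_mem w ((G.mem_neighborFinset v w).2 hadj)
        fun u hu huw => ih u ((G.mem_neighborFinset v u).1 hu) huw] at hsum
    exact hsum

theorem Propagates.finrank_ker_adjMatrix_le_ncard (hS : Propagates G S) :
    finrank K (LinearMap.ker (G.adjMatrix K).mulVecLin) ≤ S.ncard :=
  finrank_le_ncard_of_eqOn_zero fun _ hx hxS =>
    funext fun v => (hS v).eq_zero_of_adjMatrix_mulVec_eq_zero hx hxS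

end Nullity

theorem PropReach.map {V W : Type*} {G : SimpleGraph V} {H : SimpleGraph W} (f : G ↪g H)
    {S : Set V} {T : Set W} (hS : ∀ s ∈ S, PropReach H T (f s))
    (hout : ∀ v x, H.Adj (f v) x → x ∉ range f → PropReach H T x)
    {v : V} (h : PropReach G S v) : PropReach H T (f v) := by
  induction h with
  | base hs => exact hS _ hs
  | @step v w _ hadj _ ihv ih =>
    refine .step ihv (f.map_adj_iff.2 hadj) fun x hx hxw => ?_
    by_cases hxr : x ∈ range f
    · obtain ⟨y, rfl⟩ := hxr
      exact ih y (f.map_adj_iff.1 hx) fun hyw => hxw (hyw ▸ rfl)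
    · exact hout v x hx hxr

namespace BalancedTree

abbrev Vertex (m d : ℕ) := {l : List (Fin m) // l.length ≤ d}

noncomputable instance (m d : ℕ) : Fintype {l : List (Fin m) // l.length ≤ d} :=
  (List.finite_length_le (Fin m) d).fintype

instance (m d : ℕ) : DecidableRel (BalancedTree m d).Adj := fun a b =>
  inferInstanceAs (Decidable ((∃ x : Fin m, a.1 = x :: b.1) ∨ ∃ x : Fin m, b.1 = x :: a.1))

variable {m : ℕ}

@[simps]
def embedding {k d : ℕ} (h : k ≤ d) : BalancedTree m k ↪g BalancedTree m d where
  toFun v := ⟨v.1, v.2.trans h⟩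
  inj' _ _ hvw := Subtype.ext (Subtype.mk.inj hvw)
  map_rel_iff' := Iff.rfl

theorem length_eq_of_adj {d : ℕ} {u w : Vertex m d} (h : (BalancedTree m d).Adj u w) :
    u.1.length = w.1.length + 1 ∨ w.1.length = u.1.length + 1 := by
  rcases h with ⟨c, hc⟩ | ⟨c, hc⟩ <;> simp [hc]

theorem eq_tail_of_adj_of_length_eq {d : ℕ} {ℓ x : Vertex m d} (hℓ : ℓ.1.length = d)
    (h : (BalancedTree m d).Adj ℓ x) : x.1 = ℓ.1.tail := by
  rcases h with ⟨c, hc⟩ | ⟨c, hc⟩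
  · simp [hc]
  · have := x.2
    simp only [hc, List.length_cons] at this
    omega

def freeLeaves (i : Fin m) (d : ℕ) : Set (List (Fin m)) :=
  {l | l.length = d ∧ l.head? ≠ some i}

def leafSet (i j : Fin m) : ℕ → Set (List (Fin m))
  | 0 => freeLeaves i 0
  | 1 => freeLeaves i 1
  | k + 2 => freeLeaves i (k + 2) ∪ (fun v => i :: j :: v) '' leafSet i j k

theorem length_of_mem_leafSet {i j : Fin m} : ∀ {k : ℕ} {l : List (Fin m)},
    l ∈ leafSet i j k → l.length = k
  | 0, _, hl | 1, _, hl => hl.1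
  | k + 2, _, .inl hl => hl.1
  | k + 2, _, .inr ⟨v, hv, hvl⟩ => by simp [← hvl, length_of_mem_leafSet hv]

section Propagation

variable {d : ℕ} {i j : Fin m} {S : Set (Vertex m d)}

theorem propReach_of_length_add_one (hij : j ≠ i) (hS : Subtype.val ⁻¹' freeLeaves i d ⊆ S)
    {w : Vertex m d} (hw : w.1.length + 1 = d) : PropReach (BalancedTree m d) S w := by
  have hleaf : (j :: w.1).length = d := by simp [hw]
  refine .step (v := ⟨j :: w.1, hleaf.le⟩) (.base (hS ⟨hleaf, by simpa using hij⟩))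
    (Or.inl ⟨j, rfl⟩) fun x hx hxw => ?_
  exact absurd (Subtype.ext (eq_tail_of_adj_of_length_eq hleaf hx)) hxw

theorem propagates_of_preimage_freeLeaves_subset (hij : j ≠ i)
    (hS : Subtype.val ⁻¹' freeLeaves i d ⊆ S)
    (hlow : ∀ v : Vertex m d, v.1.length + 2 ≤ d → PropReach (BalancedTree m d) S v) :
    Propagates (BalancedTree m d) S := by
  rintro ⟨l, hl⟩
  obtain hlt | hd | hd : l.length + 2 ≤ d ∨ l.length + 1 = d ∨ l.length = d := by omega
  · exact hlow _ hlt
  · exact propReach_of_length_add_one hij hS hd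
  cases l with
  | nil => exact .base (hS ⟨hd, by simp⟩)
  | cons a t =>
    by_cases ha : a = i
    · subst ha
      -- the parent `t` of a leaf `a :: t` forces it: its parent is low and its other children free
      refine .step (propReach_of_length_add_one hij hS (w := ⟨t, Nat.le_of_succ_le hl⟩)
        (by simpa using hd)) (Or.inr ⟨a, rfl⟩) ?_
      rintro x (⟨b, hb⟩ | ⟨b, hb⟩) hxa
      · have := congrArg List.length hb
        exact hlow x (by simp only [List.length_cons] at this hd; omega)
      · refine .base (hS ⟨by simpa [hb] using hd, ?_⟩)
        rintro hbx
        simp only [hb, List.head?_cons, Option.some.injEq] at hbx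
        exact hxa (Subtype.ext (by simp [hb, hbx]))
    · exact .base (hS ⟨hd, by simpa using ha⟩)

end Propagation

theorem propagates_leafSet {i j : Fin m} (hij : j ≠ i) :
    ∀ k, Propagates (BalancedTree m k) (Subtype.val ⁻¹' leafSet i j k)
  | 0 => propagates_of_preimage_freeLeaves_subset hij subset_rfl fun _ hv => by omega
  | 1 => propagates_of_preimage_freeLeaves_subset hij subset_rfl fun _ hv => by omega
  | k + 2 => by
    have hfree : (Subtype.val ⁻¹' freeLeaves i (k + 2) : Set (Vertex m (k + 2))) ⊆
        Subtype.val ⁻¹' leafSet i j (k + 2) :=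
      preimage_mono subset_union_left
    refine propagates_of_preimage_freeLeaves_subset hij hfree fun v hv => ?_
    refine (propagates_leafSet hij k ⟨v.1, by omega⟩).map (embedding (by omega)) ?_ ?_
    · -- a leaf `s` of the smaller tree is forced by its child `j :: s`, all of whose children
      -- lie in the set
      rintro s hs
      have hlen := length_of_mem_leafSet (show s.1 ∈ leafSet i j k from hs)
      refine .step (v := ⟨j :: s.1, by simp [hlen]⟩)
        (propReach_of_length_add_one hij hfree (by simp [hlen])) (Or.inl ⟨j, rfl⟩) ?_
      rintro x (⟨b, hb⟩ | ⟨b, hb⟩) hxs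
      · exact absurd (Subtype.ext (List.cons.inj hb).2.symm) hxs
      · refine .base ?_
        by_cases hbi : b = i
        · exact .inr ⟨s.1, hs, by simp [hb, hbi]⟩
        · exact .inl ⟨by simp [hb, hlen], by simpa [hb] using hbi⟩
    · rintro w x hx hxr
      refine propReach_of_length_add_one hij hfree ?_
      have hw := w.2
      have hxk : ¬ x.1.length ≤ k := fun h => hxr ⟨⟨x.1, h⟩, rfl⟩
      have := length_eq_of_adj hx
      simp only [embedding_apply_coe] at this
      omega

section Kernel

variable {R : Type*} [CommRing R]

/-- `X`, read on the vertices of the depth-`k` tree, is a kernel vector of its adjacency matrix;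
functions on all words are used so that parents and children need no length bounds. -/
structure IsKernelVec (k : ℕ) (X : List (Fin m) → R) : Prop where
  eq_zero_of_lt_length : ∀ l : List (Fin m), k < l.length → X l = 0
  sum_nil : ∑ a, X [a] = 0
  add_sum_cons : ∀ a t, t.length < k → X t + ∑ b, X (b :: a :: t) = 0

theorem IsKernelVec.add {k : ℕ} {X Y : List (Fin m) → R} (hX : IsKernelVec k X)
    (hY : IsKernelVec k Y) : IsKernelVec k (X + Y) where
  eq_zero_of_lt_length l hl := by
    simp [hX.eq_zero_of_lt_length l hl, hY.eq_zero_of_lt_length l hl]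
  sum_nil := by simp [Finset.sum_add_distrib, hX.sum_nil, hY.sum_nil]
  add_sum_cons a t ht := by
    simp only [Pi.add_apply, Finset.sum_add_distrib]
    linear_combination hX.add_sum_cons a t ht + hY.add_sum_cons a t ht

theorem neighborFinset_eq {d : ℕ} (v : Vertex m d) :
    (BalancedTree m d).neighborFinset v =
      ({u | ∃ c, v.1 = c :: u.1} : Finset (Vertex m d)) ∪
        ({u | ∃ c, u.1 = c :: v.1} : Finset (Vertex m d)) := by
  ext u
  rw [SimpleGraph.mem_neighborFinset, Finset.mem_union]
  simp only [Finset.mem_filter, Finset.mem_univ, true_and]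
  rfl

theorem sum_parent {d : ℕ} (X : List (Fin m) → R) (v : Vertex m d) :
    ∑ u : Vertex m d with ∃ c, v.1 = c :: u.1, X u.1 = if v.1 = [] then 0 else X v.1.tail := by
  obtain ⟨l, hv⟩ := v
  cases l with
  | nil => exact Finset.sum_eq_zero (by simp)
  | cons a t =>
    have ht : t.length ≤ d := Nat.le_of_succ_le hv
    rw [Finset.sum_eq_single_of_mem ⟨t, ht⟩ (by simp)]
    · simp
    · rintro u hu hut
      obtain ⟨c, hc⟩ := (Finset.mem_filter.1 hu).2
      exact absurd (Subtype.ext (List.cons.inj hc).2.symm) hut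

theorem sum_children {d : ℕ} (X : List (Fin m) → R) (hX : ∀ l, d < l.length → X l = 0)
    (v : Vertex m d) :
    ∑ u : Vertex m d with ∃ c, u.1 = c :: v.1, X u.1 = ∑ a, X (a :: v.1) := by
  by_cases hv : v.1.length < d
  · have hchildren : ({u | ∃ c, u.1 = c :: v.1} : Finset (Vertex m d)) =
        Finset.univ.image fun a => ⟨a :: v.1, hv⟩ := by
      ext u
      simp [Subtype.ext_iff, eq_comm]
    rw [hchildren, Finset.sum_image fun a _ b _ hab => (List.cons.inj (congrArg Subtype.val hab)).1]
  · rw [Finset.sum_eq_zero, Finset.sum_eq_zero]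
    · exact fun a _ => hX _ (Nat.lt_succ_of_le (not_lt.1 hv))
    · rintro u hu
      obtain ⟨c, hc⟩ := (Finset.mem_filter.1 hu).2
      have hu := u.2
      rw [hc, List.length_cons] at hu
      omega

theorem IsKernelVec.adjMatrix_mulVec_eq_zero {k : ℕ} {X : List (Fin m) → R}
    (hX : IsKernelVec k X) : (BalancedTree m k).adjMatrix R *ᵥ (fun v => X v.1) = 0 := by
  funext ⟨l, hl⟩
  have hdisj : Disjoint ({u | ∃ c, l = c :: u.1} : Finset (Vertex m k))
      ({u | ∃ c, u.1 = c :: l} : Finset (Vertex m k)) := by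
    refine Finset.disjoint_filter.2 fun u _ ⟨c, hc⟩ ⟨c', hc'⟩ => ?_
    have := congrArg List.length hc
    have := congrArg List.length hc'
    simp only [List.length_cons] at *
    omega
  rw [SimpleGraph.adjMatrix_mulVec_apply, neighborFinset_eq, Finset.sum_union hdisj,
    sum_parent X ⟨l, hl⟩, sum_children X hX.eq_zero_of_lt_length ⟨l, hl⟩]
  cases l with
  | nil => simpa using hX.sum_nil
  | cons a t => simpa using hX.add_sum_cons a t (Nat.lt_of_succ_le hl)

end Kernel

section Construction

variable {R : Type*} [CommRing R] {i : Fin m}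

def leafBalance (i : Fin m) (d : ℕ) (f : List (Fin m) → R) (l : List (Fin m)) : R :=
  if l.length = d then
    if l.head? = some i then -∑ b ∈ {i}ᶜ, f (b :: l.tail) else f l
  else 0

theorem sum_leafBalance_cons (d : ℕ) (f : List (Fin m) → R) (t : List (Fin m)) :
    ∑ b, leafBalance i d f (b :: t) = 0 := by
  by_cases ht : t.length + 1 = d
  · rw [Fintype.sum_eq_add_sum_compl i]
    have hrest : ∀ b ∈ ({i}ᶜ : Finset (Fin m)), leafBalance i d f (b :: t) = f (b :: t) := by
      intro b hb
      simp_all [leafBalance]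
    rw [Finset.sum_congr rfl hrest]
    simp [leafBalance, ht]
  · simp [leafBalance, ht]

theorem isKernelVec_leafBalance (d : ℕ) (f : List (Fin m) → R) :
    IsKernelVec d (leafBalance i d f) where
  eq_zero_of_lt_length l hl := by simp [leafBalance, hl.ne']
  sum_nil := sum_leafBalance_cons d f []
  add_sum_cons a t ht := by
    rw [sum_leafBalance_cons, add_zero]
    simp [leafBalance, ht.ne]

theorem leafBalance_of_mem_freeLeaves {d : ℕ} {f : List (Fin m) → R} {l : List (Fin m)}
    (hl : l ∈ freeLeaves i d) : leafBalance i d f l = f l := by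
  simp [leafBalance, hl.1, hl.2]

def liftByTwo (i : Fin m) (k : ℕ) (y : List (Fin m) → R) (l : List (Fin m)) : R :=
  if l.length ≤ k + 1 then y l
  else if l.length = k + 2 ∧ l.head? = some i then -y (l.drop 2) else 0

theorem IsKernelVec.liftByTwo {k : ℕ} {y : List (Fin m) → R} (hy : IsKernelVec k y) :
    IsKernelVec (k + 2) (liftByTwo i k y) where
  eq_zero_of_lt_length l hl := by
    rw [BalancedTree.liftByTwo, if_neg (by omega), if_neg (by omega)]
  sum_nil := by simp [BalancedTree.liftByTwo, hy.sum_nil]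
  add_sum_cons a t ht := by
    obtain ht | rfl | ht : t.length < k ∨ t.length = k ∨ t.length = k + 1 := by omega
    · simpa [BalancedTree.liftByTwo, show t.length ≤ k + 1 by omega,
        show t.length + 1 ≤ k by omega] using hy.add_sum_cons a t ht
    · simp [BalancedTree.liftByTwo]
    · simp [BalancedTree.liftByTwo, ht, hy.eq_zero_of_lt_length t (by omega)]

theorem liftByTwo_of_mem_freeLeaves {k : ℕ} {y : List (Fin m) → R} {l : List (Fin m)}
    (hl : l ∈ freeLeaves i (k + 2)) : liftByTwo i k y l = 0 := by
  simp [liftByTwo, hl.1, hl.2]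

theorem exists_isKernelVec_eqOn_leafSet (i j : Fin m) :
    ∀ (k : ℕ) (f : List (Fin m) → R), ∃ X, IsKernelVec k X ∧ EqOn X f (leafSet i j k)
  | 0, f | 1, f => ⟨leafBalance i _ f, isKernelVec_leafBalance _ f,
      fun _ hl => leafBalance_of_mem_freeLeaves hl⟩
  | k + 2, f => by
    -- the balancing term puts `-∑ b ≠ i, f (b :: j :: v)` at `i :: j :: v`; the lift offsets it
    obtain ⟨Y, hY, hYf⟩ := exists_isKernelVec_eqOn_leafSet i j k
      fun v => -f (i :: j :: v) - ∑ b ∈ {i}ᶜ, f (b :: j :: v)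
    refine ⟨liftByTwo i k Y + leafBalance i (k + 2) f,
      hY.liftByTwo.add (isKernelVec_leafBalance _ f), ?_⟩
    rintro _ (hl | ⟨v, hv, rfl⟩)
    · simp [liftByTwo_of_mem_freeLeaves hl, leafBalance_of_mem_freeLeaves hl]
    · have hvk := length_of_mem_leafSet hv
      simp [liftByTwo, leafBalance, hvk, hYf hv]

end Construction

theorem ncard_leafSet_le_finrank_ker (K : Type*) [Field K] (i j : Fin m) (k : ℕ) :
    (Subtype.val ⁻¹' leafSet i j k : Set (Vertex m k)).ncard ≤
      finrank K (LinearMap.ker ((BalancedTree m k).adjMatrix K).mulVecLin) := by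
  refine ncard_le_finrank_of_forall_exists_eqOn fun f => ?_
  obtain ⟨X, hX, hXf⟩ := exists_isKernelVec_eqOn_leafSet i j k
    fun l => if h : l.length ≤ k then f ⟨l, h⟩ else 0
  exact ⟨fun v => X v.1, hX.adjMatrix_mulVec_eq_zero, fun v hv => by simp [hXf hv, v.2]⟩

theorem exists_leaves_propagates_ncard_le (hm : 2 ≤ m) (k : ℕ) :
    ∃ S : Set (Vertex m k), (∀ v ∈ S, v.1.length = k) ∧ Propagates (BalancedTree m k) S ∧
      ∀ T, Propagates (BalancedTree m k) T → S.ncard ≤ T.ncard := by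
  let i : Fin m := ⟨0, by omega⟩
  let j : Fin m := ⟨1, by omega⟩
  exact ⟨_, fun _ hv => length_of_mem_leafSet hv, propagates_leafSet (i := i) (j := j)
    (by simp [i, j, Fin.ext_iff]) k, fun T hT =>
      (ncard_leafSet_le_finrank_ker ℚ i j k).trans hT.finrank_ker_adjMatrix_le_ncard⟩

end BalancedTree

theorem propNumLeaf_eq_propNum_balancedTree_general (m k : ℕ) (hm : 2 ≤ m) :
    sInf {n : ℕ | ∃ S : Set {l : List (Fin m) // l.length ≤ k},
        (∀ v ∈ S, (v : {l : List (Fin m) // l.length ≤ k}).1.length = k) ∧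
        S.ncard = n ∧ Propagates (BalancedTree m k) S}
      = propNum (BalancedTree m k) ∧
    ∃ S : Set {l : List (Fin m) // l.length ≤ k},
      (∀ v ∈ S, (v : {l : List (Fin m) // l.length ≤ k}).1.length = k) ∧
      Propagates (BalancedTree m k) S ∧ S.ncard = propNum (BalancedTree m k) := by
  obtain ⟨S, hleaf, hS, hmin⟩ := BalancedTree.exists_leaves_propagates_ncard_le hm k
  have hπ : propNum (BalancedTree m k) = S.ncard :=
    IsLeast.csInf_eq ⟨⟨S, rfl, hS⟩, by rintro _ ⟨T, rfl, hT⟩; exact hmin T hT⟩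
  refine ⟨?_, S, hleaf, hS, hπ.symm⟩
  rw [hπ]
  refine IsLeast.csInf_eq ⟨⟨S, hleaf, rfl, hS⟩, ?_⟩
  rintro _ ⟨T, -, rfl, hT⟩
  exact hmin T hT

/-- For `m ≥ 2`, `k ≥ 1`, in the balanced `m`-ary tree of depth `k` the
minimum cardinality of a propagating set consisting only of leaves (vertices at distance `k`
from the root, i.e. words of length `k`) equals the unrestricted minimum `π`; equivalently,
some set of leaves of cardinality `π` propagates. -/
theorem propNumLeaf_eq_propNum_balancedTree (m k : ℕ) (hm : 2 ≤ m) (hk : 1 ≤ k) :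
    sInf {n : ℕ | ∃ S : Set {l : List (Fin m) // l.length ≤ k},
        (∀ v ∈ S, (v : {l : List (Fin m) // l.length ≤ k}).1.length = k) ∧
        S.ncard = n ∧ Propagates (BalancedTree m k) S}
      = propNum (BalancedTree m k) ∧
    ∃ S : Set {l : List (Fin m) // l.length ≤ k},
      (∀ v ∈ S, (v : {l : List (Fin m) // l.length ≤ k}).1.length = k) ∧
      Propagates (BalancedTree m k) S ∧ S.ncard = propNum (BalancedTree m k) :=
  propNumLeaf_eq_propNum_balancedTree_general m k hm
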